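/- (Clean-round synchronization for FloodSet.) Suppose the delivery pattern is consistent with the crash pattern and round t (with t < r) is failure-free, i.e., crash q ≠ some t for every process q. Then any two processes alive at the end of round t have equal FloodSet sets after round t: W (t+1) p = W (t+1) p' for all p, p' alive at the end of round t. -/

import Mathlib

/-! In a failure-free round every process alive at its end hears from exactly the processes
alive at its end, itself among them, so each ends the round with the union of their sets. -/

open scoped Classical

/-- The FloodSet execution: `W 0 p = {init p}` and, for `t < r`,
`W (t+1) p = W t p ∪ ⋃ q, (if delivered t q p then W t q else ∅)`
(beyond round `r` the set is just carried along). -/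
noncomputable def floodW {n r : ℕ} {V : Type} (init : Fin n → V)
    (delivered : Fin r → Fin n → Fin n → Prop) : ℕ → Fin n → Finset V
  | 0, p => {init p}
  | t + 1, p =>
      if h : t < r then
        floodW init delivered t p ∪
          Finset.univ.biUnion fun q =>
            if delivered ⟨t, h⟩ q p then floodW init delivered t q else ∅
      else floodW init delivered t p

/-- Process `p` is alive at the end of round `t`. -/
def aliveAtEnd {n r : ℕ} (crash : Fin n → Option (Fin r)) (t : ℕ) (p : Fin n) : Prop :=
  crash p = none ∨ ∃ s : Fin r, crash p = some s ∧ t < s.val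

/-- The delivery pattern is consistent with the crash pattern. -/
def consistentDel {n r : ℕ} (crash : Fin n → Option (Fin r))
    (delivered : Fin r → Fin n → Fin n → Prop) : Prop :=
  (∀ (t : Fin r) (q p : Fin n),
      (crash q = none ∨ ∃ s : Fin r, crash q = some s ∧ t.val < s.val) → delivered t q p) ∧
  (∀ (t : Fin r) (q p : Fin n) (s : Fin r), crash q = some s → s.val < t.val →
      ¬ delivered t q p)

open Finset

section FloodSet

variable {n r : ℕ} {V : Type} (init : Fin n → V) (delivered : Fin r → Fin n → Fin n → Prop)

theorem mem_floodW_succ (t : Fin r) (p : Fin n) (x : V) :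
    x ∈ floodW init delivered (t.val + 1) p ↔
      x ∈ floodW init delivered t p ∨ ∃ q, delivered t q p ∧ x ∈ floodW init delivered t q := by
  simp only [floodW, dif_pos t.isLt, mem_union, mem_biUnion, mem_univ, true_and]
  refine or_congr_right (exists_congr fun q => ?_)
  split_ifs with h <;> simp [h]

theorem floodW_succ_eq_biUnion_of_delivered_iff (t : Fin r) (P : Fin n → Prop) (p : Fin n)
    (hdel : ∀ q, delivered t q p ↔ P q) (hp : P p) :
    floodW init delivered (t.val + 1) p = (univ.filter P).biUnion (floodW init delivered t) := by
  ext x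
  simp only [mem_floodW_succ, hdel, mem_biUnion, mem_filter, mem_univ, true_and]
  exact ⟨fun h => h.elim (fun hx => ⟨p, hp, hx⟩) id, Or.inr⟩

end FloodSet

theorem consistentDel.delivered_iff_aliveAtEnd {n r : ℕ} {crash : Fin n → Option (Fin r)}
    {delivered : Fin r → Fin n → Fin n → Prop} (hcons : consistentDel crash delivered)
    {t : Fin r} (hff : ∀ q : Fin n, crash q ≠ some t) (q p : Fin n) :
    delivered t q p ↔ aliveAtEnd crash t q := by
  refine ⟨fun hd => ?_, hcons.1 t q p⟩
  rcases hq : crash q with _ | s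
  · exact Or.inl hq
  · refine Or.inr ⟨s, hq, ?_⟩
    rcases lt_trichotomy s.val t.val with hlt | heq | hgt
    · exact absurd hd (hcons.2 t q p s hq hlt)
    · exact absurd (Fin.ext heq ▸ hq) (hff q)
    · exact hgt

theorem stmt_6_general (n r : ℕ)
    (V : Type)
    (init : Fin n → V) (crash : Fin n → Option (Fin r))
    (delivered : Fin r → Fin n → Fin n → Prop)
    (hcons : consistentDel crash delivered)
    (t : Fin r) (hff : ∀ q : Fin n, crash q ≠ some t) :
    ∀ p p' : Fin n, aliveAtEnd crash t.val p → aliveAtEnd crash t.val p' →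
      floodW init delivered (t.val + 1) p = floodW init delivered (t.val + 1) p' := by
  intro p p' hp hp'
  rw [floodW_succ_eq_biUnion_of_delivered_iff init delivered t _ p
      (fun q => hcons.delivered_iff_aliveAtEnd hff q p) hp,
    floodW_succ_eq_biUnion_of_delivered_iff init delivered t _ p'
      (fun q => hcons.delivered_iff_aliveAtEnd hff q p') hp']

/-- Clean-round synchronization for FloodSet. -/
theorem stmt_6 (n r : ℕ) (hr : 1 ≤ r)
    (V : Type) [Fintype V] [Nonempty V] [LinearOrder V]
    (init : Fin n → V) (crash : Fin n → Option (Fin r))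
    (delivered : Fin r → Fin n → Fin n → Prop)
    (hcons : consistentDel crash delivered)
    (t : Fin r) (hff : ∀ q : Fin n, crash q ≠ some t) :
    ∀ p p' : Fin n, aliveAtEnd crash t.val p → aliveAtEnd crash t.val p' →
      floodW init delivered (t.val + 1) p = floodW init delivered (t.val + 1) p' :=
  stmt_6_general n r V init crash delivered hcons t hff
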